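/- arXiv:2412.16328 — 7 statements merged into one kernel-verified Lean document; each statement's English description precedes it below -/
import Mathlib

section
/- For every natural number n ≥ 1, every k < 4n, and all natural numbers θ and v, the following are equivalent: (1) there exist sequences y₀, y₁, …, y_{4n} and w₀, w₁, …, w_{4n−1} of natural numbers such that w_j ≤ 1 for all j < 4n, y_j = 2·y_{j+1} + w_j for all j < 4n, y₀ = θ, and w_k = v; (2) v = 1 if the k-th least significant bit of the binary expansion of θ is 1, and v = 0 otherwise (i.e., v = if Nat.testBit θ k then 1 else 0). -/
/-!
If `y j = 2 * y (j + 1) + w j` with `w j ∈ {0, 1}`, then `w j = y j % 2` and `y (j + 1) = y j / 2`,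
so the chain starting at `y 0 = θ` is forced to be `y j = θ / 2 ^ j`, `w j = θ / 2 ^ j % 2`: the
bits are exactly the binary digits of `θ`. Conversely these digits satisfy the recurrence.
-/

namespace Nat

theorem ite_testBit_eq_div_two_pow_mod_two (θ k : ℕ) :
    (if θ.testBit k then 1 else 0) = θ / 2 ^ k % 2 := by
  rw [← toNat_testBit]
  cases θ.testBit k <;> rfl

theorem div_two_pow_eq_two_mul_div_two_pow_succ_add_mod (θ j : ℕ) :
    θ / 2 ^ j = 2 * (θ / 2 ^ (j + 1)) + θ / 2 ^ j % 2 := by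
  rw [pow_succ, ← Nat.div_div_eq_div_mul]
  exact (div_add_mod _ 2).symm

section BinaryChain

variable {m : ℕ} {y w : ℕ → ℕ}

theorem eq_div_two_pow_of_binary_chain (hw : ∀ j < m, w j ≤ 1)
    (hy : ∀ j < m, y j = 2 * y (j + 1) + w j) : ∀ j ≤ m, y j = y 0 / 2 ^ j
  | 0, _ => by simp
  | j + 1, hj => by
    have hstep : y (j + 1) = y j / 2 := by
      have := hy j hj; have := hw j hj; omega
    rw [hstep, eq_div_two_pow_of_binary_chain hw hy j (le_of_succ_le hj), Nat.div_div_eq_div_mul, pow_succ]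

theorem eq_div_two_pow_mod_two_of_binary_chain (hw : ∀ j < m, w j ≤ 1)
    (hy : ∀ j < m, y j = 2 * y (j + 1) + w j) {j : ℕ} (hj : j < m) :
    w j = y 0 / 2 ^ j % 2 := by
  rw [← eq_div_two_pow_of_binary_chain hw hy j hj.le]
  have := hy j hj; have := hw j hj; omega

end BinaryChain

end Nat

theorem stmt_0_general (n : ℕ) (k : ℕ) (hk : k < 4 * n) (θ v : ℕ) :
    (∃ y w : ℕ → ℕ,
      (∀ j < 4 * n, w j ≤ 1) ∧
      (∀ j < 4 * n, y j = 2 * y (j + 1) + w j) ∧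
      y 0 = θ ∧ w k = v) ↔
    v = (if Nat.testBit θ k then 1 else 0) := by
  rw [Nat.ite_testBit_eq_div_two_pow_mod_two]
  constructor
  · rintro ⟨y, w, hw, hy, rfl, rfl⟩
    exact Nat.eq_div_two_pow_mod_two_of_binary_chain hw hy hk
  · rintro rfl
    exact ⟨fun j => θ / 2 ^ j, fun j => θ / 2 ^ j % 2,
      fun j _ => Nat.le_of_lt_succ (Nat.mod_lt _ two_pos),
      fun j _ => Nat.div_two_pow_eq_two_mul_div_two_pow_succ_add_mod θ j, by simp, rfl⟩

/-- Correctness of the Presburger formula `Ψ_{k,v}(θ)`: there exist quotients `y j`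
and bits `w j` with `y j = 2 * y (j+1) + w j`, `y 0 = θ`, `w j ∈ {0,1}`, and `w k = v`
iff `v` is the `k`-th least significant bit of `θ`. -/
theorem stmt_0 (n : ℕ) (hn : 1 ≤ n) (k : ℕ) (hk : k < 4 * n) (θ v : ℕ) :
    (∃ y w : ℕ → ℕ,
      (∀ j < 4 * n, w j ≤ 1) ∧
      (∀ j < 4 * n, y j = 2 * y (j + 1) + w j) ∧
      y 0 = θ ∧ w k = v) ↔
    v = (if Nat.testBit θ k then 1 else 0) :=
  stmt_0_general n k hk θ v
end

section
/- Let n ≥ 1, let 1 ≤ i ≤ n, and set d = 4(n − i). Let θ be a natural number such that Nat.testBit θ j = false for all j < d + 4, and such that every position j with Nat.testBit θ j = true satisfies j % 4 = 2. Then the set of natural numbers θ' with θ ≤ θ' < θ + 2^{d+4} satisfying the exit condition — namely Nat.testBit θ' d = true, Nat.testBit θ' j = false for all j < d, and Nat.testBit θ' j = false for every j with j % 4 = 1 or j % 4 = 3 — is exactly the two-element set {θ + 2^d, θ + 2^d + 2^{d+2}}. -/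
/-!
Because `θ` vanishes below `d + 4`, every `t ∈ [θ, θ + 2^(d+4))` is `θ + r` with the bits of
`r` and `θ` disjoint, so the bits of `t` are those of `θ` together with those of `r`. As `θ`
has only `β`-bits, all of them above `d + 4`, the exit condition on `t` is the exit condition
on `r`. That condition clears the bits of `r` below `d`, so `r = 2^d * s` with `s < 16`, and
it asks `s` to be odd with bits 1 and 3 clear: `s = 1` or `s = 5`.
-/

namespace Nat

theorem two_pow_dvd_of_testBit_eq_false {x k : ℕ} (h : ∀ j < k, x.testBit j = false) :
    2 ^ k ∣ x := by
  refine dvd_of_mod_eq_zero (eq_of_testBit_eq fun j => ?_)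
  rw [testBit_mod_two_pow, zero_testBit]
  by_cases hj : j < k <;> simp [hj, h]

theorem testBit_add_of_dvd_of_lt {a b k : ℕ} (ha : 2 ^ k ∣ a) (hb : b < 2 ^ k) (j : ℕ) :
    (a + b).testBit j = (a.testBit j || b.testBit j) := by
  obtain ⟨m, rfl⟩ := ha
  rw [two_pow_add_eq_or_of_lt hb, testBit_or]

end Nat

open Nat

/-- In the paper's sectoring of time, the positions `≡ 3` and `≡ 1 (mod 4)` carry the
`α`- and `γ`-bits. -/
def AlphaGammaClear (t : ℕ) : Prop :=
  ∀ j, (j % 4 = 1 ∨ j % 4 = 3) → t.testBit j = false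

/-- Here `d` is the position of `δ_i`. -/
def IsExitTime (d t : ℕ) : Prop :=
  t.testBit d = true ∧ (∀ j < d, t.testBit j = false) ∧ AlphaGammaClear t

theorem isExitTime_add_iff {d k θ r : ℕ} (hdk : d < k) (hθ : ∀ j < k, θ.testBit j = false)
    (hθag : AlphaGammaClear θ) (hr : r < 2 ^ k) :
    IsExitTime d (θ + r) ↔ IsExitTime d r := by
  have hbit := testBit_add_of_dvd_of_lt (two_pow_dvd_of_testBit_eq_false hθ) hr
  simp only [IsExitTime, AlphaGammaClear, hbit, hθ d hdk, Bool.false_or]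
  refine and_congr_right fun _ => and_congr
    (forall₂_congr fun j hj => by rw [hθ j (by omega), Bool.false_or])
    (forall₂_congr fun j hj => by rw [hθag j hj, Bool.false_or])

theorem isExitTime_two_pow {d : ℕ} (hd : d % 4 = 0) : IsExitTime d (2 ^ d) := by
  refine ⟨by simp, fun j hj => ?_, fun j hj => ?_⟩ <;>
    simp only [testBit_two_pow, decide_eq_false_iff_not] <;> omega

theorem isExitTime_two_pow_add_two_pow {d : ℕ} (hd : d % 4 = 0) :
    IsExitTime d (2 ^ d + 2 ^ (d + 2)) := by
  have hbit : ∀ j,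
      (2 ^ d + 2 ^ (d + 2)).testBit j = (decide (d + 2 = j) || decide (d = j)) := by
    intro j
    rw [add_comm, testBit_add_of_dvd_of_lt dvd_rfl (pow_lt_pow_right₀ one_lt_two (by omega)),
      testBit_two_pow, testBit_two_pow]
  refine ⟨by simp [hbit], fun j hj => ?_, fun j hj => ?_⟩ <;>
    simp only [hbit, Bool.or_eq_false_iff, decide_eq_false_iff_not] <;> omega

theorem eq_one_or_eq_five_of_testBit {s : ℕ} (hs : s < 16) (h0 : s.testBit 0 = true)
    (h1 : s.testBit 1 = false) (h3 : s.testBit 3 = false) : s = 1 ∨ s = 5 := by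
  revert s
  decide

theorem eq_of_isExitTime {d r : ℕ} (hd : d % 4 = 0) (hr : r < 2 ^ (d + 4))
    (h : IsExitTime d r) : r = 2 ^ d ∨ r = 2 ^ d + 2 ^ (d + 2) := by
  obtain ⟨hδ, hlow, hag⟩ := h
  obtain ⟨s, rfl⟩ := two_pow_dvd_of_testBit_eq_false hlow
  have hbit : ∀ k, (2 ^ d * s).testBit (d + k) = s.testBit k := by
    simp [testBit_two_pow_mul]
  have hs : s < 16 := by
    rw [pow_add] at hr
    exact Nat.lt_of_mul_lt_mul_left hr
  rcases eq_one_or_eq_five_of_testBit hs ((hbit 0).symm.trans hδ)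
    (by rw [← hbit]; exact hag _ (by omega)) (by rw [← hbit]; exact hag _ (by omega))
    with rfl | rfl
  · exact .inl (mul_one _)
  · exact .inr (by ring)

theorem stmt_2_general (n i : ℕ)
    (d : ℕ) (hd : d = 4 * (n - i)) (θ : ℕ)
    (hlow : ∀ j < d + 4, Nat.testBit θ j = false)
    (hbeta : ∀ j, Nat.testBit θ j = true → j % 4 = 2) :
    {θ' : ℕ | θ ≤ θ' ∧ θ' < θ + 2 ^ (d + 4) ∧
      Nat.testBit θ' d = true ∧
      (∀ j < d, Nat.testBit θ' j = false) ∧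
      (∀ j, (j % 4 = 1 ∨ j % 4 = 3) → Nat.testBit θ' j = false)} =
    {θ + 2 ^ d, θ + 2 ^ d + 2 ^ (d + 2)} := by
  have hd4 : d % 4 = 0 := by omega
  have hθ : AlphaGammaClear θ := fun j hj => by
    by_contra h
    have := hbeta j (by simpa using h)
    omega
  have hexit {r} (hr : r < 2 ^ (d + 4)) := isExitTime_add_iff (by omega : d < d + 4) hlow hθ hr
  have hlt : 2 ^ d + 2 ^ (d + 2) < 2 ^ (d + 4) := by
    rw [pow_add, pow_add]
    have := Nat.two_pow_pos d
    omega
  ext t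
  change θ ≤ t ∧ t < θ + 2 ^ (d + 4) ∧ IsExitTime d t ↔ t = _ ∨ t = _
  constructor
  · rintro ⟨hle, htlt, ht⟩
    obtain ⟨r, rfl⟩ := Nat.exists_eq_add_of_le hle
    have hr : r < 2 ^ (d + 4) := by omega
    rcases eq_of_isExitTime hd4 hr ((hexit hr).1 ht) with rfl | rfl
    · exact .inl rfl
    · exact .inr (add_assoc ..).symm
  · rintro (rfl | rfl)
    · have hr : 2 ^ d < 2 ^ (d + 4) := pow_lt_pow_right₀ one_lt_two (by omega)
      exact ⟨Nat.le_add_right .., by omega, (hexit hr).2 (isExitTime_two_pow hd4)⟩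
    · rw [add_assoc]
      exact ⟨Nat.le_add_right .., by omega, (hexit hlt).2 (isExitTime_two_pow_add_two_pow hd4)⟩

/-- Exit times of the existential-quantifier gadget: if `q_i` is entered at time `θ`
whose bits below `d + 4` are all zero (`d = 4 * (n - i)`) and whose only set bits are
β-bits (positions `≡ 2 (mod 4)`), then the times `θ'` in `[θ, θ + 2^(d+4))` satisfying
the exit condition (`δ_i = 1`, lower bits zero, all α- and γ-bits zero) are exactly
`θ + 2^d` and `θ + 2^d + 2^(d+2)`. -/
theorem stmt_2 (n i : ℕ) (hn : 1 ≤ n) (hi1 : 1 ≤ i) (hi2 : i ≤ n)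
    (d : ℕ) (hd : d = 4 * (n - i)) (θ : ℕ)
    (hlow : ∀ j < d + 4, Nat.testBit θ j = false)
    (hbeta : ∀ j, Nat.testBit θ j = true → j % 4 = 2) :
    {θ' : ℕ | θ ≤ θ' ∧ θ' < θ + 2 ^ (d + 4) ∧
      Nat.testBit θ' d = true ∧
      (∀ j < d, Nat.testBit θ' j = false) ∧
      (∀ j, (j % 4 = 1 ∨ j % 4 = 3) → Nat.testBit θ' j = false)} =
    {θ + 2 ^ d, θ + 2 ^ d + 2 ^ (d + 2)} :=
  stmt_2_general n i d hd θ hlow hbeta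
end

section
/- Let V be a finite vertex set and E : V → V → ℕ → Prop an availability relation such that there exist b ∈ ℕ and p > 0 with: for all u, v ∈ V and all θ ≥ b, E u v θ holds if and only if E u v (θ + p) holds. Define the step relation R on V × ℕ by R (u, θ) (v, θ') iff θ' = θ + 1 and E u v θ, and define the step relation R' on V × {0, …, b + p − 1} by R' (u, i) (v, j) iff E u v i and (either j = i + 1 with i + 1 ≤ b + p − 1, or i = b + p − 1 and j = b). Then for all s, t ∈ V: there exists θ ∈ ℕ such that (t, θ) is reachable from (s, 0) under the reflexive–transitive closure of R, if and only if there exists m with 0 ≤ m ≤ b + p − 1 such that (t, m) is reachable from (s, 0) under the reflexive–transitive closure of R'. -/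
/-!
Fold time `θ` onto `{0, …, b + p - 1}` by reducing it modulo `p` once it has passed `b`.
Periodicity makes the edge relation invariant under this folding, and folding turns the
time increment `θ ↦ θ + 1` into the wrap-around step of the product graph. Hence folding
maps temporal walks to walks of the product graph, and conversely every walk of the product
graph lifts, one step at a time, to a temporal walk whose folding it is.
-/

namespace Relation

variable {α β : Type*} {r : α → α → Prop} {q : β → β → Prop}

theorem ReflTransGen.exists_lift (f : α → β) (h : ∀ a b', q (f a) b' → ∃ b, r a b ∧ f b = b')
    {a : α} {b' : β} (hab : ReflTransGen q (f a) b') : ∃ b, ReflTransGen r a b ∧ f b = b' := by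
  induction hab with
  | refl => exact ⟨a, .refl, rfl⟩
  | tail _ hstep ih =>
    obtain ⟨b, hab, rfl⟩ := ih
    obtain ⟨c, hbc, rfl⟩ := h b _ hstep
    exact ⟨c, hab.tail hbc, rfl⟩

end Relation

def foldTime (b p θ : ℕ) : ℕ := if θ < b then θ else b + (θ - b) % p

section foldTime

variable {b p : ℕ}

@[simp]
theorem foldTime_zero : foldTime b p 0 = 0 := by
  unfold foldTime
  split <;> simp_all

theorem foldTime_le (hp : 0 < p) (θ : ℕ) : foldTime b p θ ≤ b + p - 1 := by
  have := Nat.mod_lt (θ - b) hp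
  unfold foldTime
  split <;> omega

theorem foldTime_succ (hp : 0 < p) (θ : ℕ) :
    (foldTime b p (θ + 1) = foldTime b p θ + 1 ∧ foldTime b p θ + 1 ≤ b + p - 1) ∨
      (foldTime b p θ = b + p - 1 ∧ foldTime b p (θ + 1) = b) := by
  unfold foldTime
  by_cases hθ : θ < b
  · by_cases hθ' : θ + 1 < b
    · simp only [hθ, hθ', if_true, true_and]
      omega
    · have hb : θ + 1 - b = 0 := by omega
      simp only [hθ, hθ', if_true, if_false, hb, Nat.zero_mod]
      omega
  · have hmod : (θ + 1 - b) % p = ((θ - b) % p + 1) % p := by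
      rw [Nat.mod_add_mod, Nat.sub_add_comm (by omega)]
    have hr := Nat.mod_lt (θ - b) hp
    simp only [hθ, show ¬θ + 1 < b by omega, if_false, hmod]
    rcases Nat.lt_or_ge ((θ - b) % p + 1) p with hlt | hge
    · rw [Nat.mod_eq_of_lt hlt]
      omega
    · rw [show (θ - b) % p + 1 = p by omega, Nat.mod_self]
      omega

theorem wrapStep_iff_eq_foldTime_succ (hp : 0 < p) (θ j : ℕ) :
    ((j = foldTime b p θ + 1 ∧ foldTime b p θ + 1 ≤ b + p - 1) ∨
      (foldTime b p θ = b + p - 1 ∧ j = b)) ↔ j = foldTime b p (θ + 1) := by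
  rcases foldTime_succ hp θ (b := b) with h | h <;> omega

theorem iff_add_mul_of_periodic {P : ℕ → Prop} (hP : ∀ θ, b ≤ θ → (P θ ↔ P (θ + p)))
    {θ : ℕ} (hθ : b ≤ θ) (k : ℕ) : P (θ + k * p) ↔ P θ := by
  induction k with
  | zero => simp
  | succ k ih =>
    rw [Nat.succ_mul, ← Nat.add_assoc, ← hP _ (by omega), ih]

theorem iff_foldTime_of_periodic {P : ℕ → Prop} (hP : ∀ θ, b ≤ θ → (P θ ↔ P (θ + p)))
    (θ : ℕ) : P (foldTime b p θ) ↔ P θ := by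
  unfold foldTime
  split
  · rfl
  · have hθ : θ = b + (θ - b) % p + (θ - b) / p * p := by
      have := Nat.mod_add_div' (θ - b) p
      omega
    conv_rhs => rw [hθ]
    exact (iff_add_mul_of_periodic hP (Nat.le_add_right _ _) _).symm

end foldTime

theorem stmt_8_general {V : Type*} (E : V → V → ℕ → Prop)
    (b p : ℕ) (hp : 0 < p)
    (hper : ∀ u v θ, b ≤ θ → (E u v θ ↔ E u v (θ + p)))
    (R R' : V × ℕ → V × ℕ → Prop)
    (hR : ∀ x y, R x y ↔ y.2 = x.2 + 1 ∧ E x.1 y.1 x.2)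
    (hR' : ∀ x y, R' x y ↔ E x.1 y.1 x.2 ∧
      ((y.2 = x.2 + 1 ∧ x.2 + 1 ≤ b + p - 1) ∨ (x.2 = b + p - 1 ∧ y.2 = b)))
    (s t : V) :
    (∃ θ : ℕ, Relation.ReflTransGen R (s, 0) (t, θ)) ↔
    (∃ m : ℕ, m ≤ b + p - 1 ∧ Relation.ReflTransGen R' (s, 0) (t, m)) := by
  let fold : V × ℕ → V × ℕ := fun x => (x.1, foldTime b p x.2)
  have hR'_fold : ∀ x y, R' (fold x) y ↔ R x (y.1, x.2 + 1) ∧ y.2 = foldTime b p (x.2 + 1) := by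
    intro x y
    rw [hR', hR, wrapStep_iff_eq_foldTime_succ hp,
      iff_foldTime_of_periodic (hper x.1 y.1)]
    simp
  constructor
  · rintro ⟨θ, hreach⟩
    refine ⟨foldTime b p θ, foldTime_le hp θ, ?_⟩
    have hpush : ∀ x y, R x y → R' (fold x) (fold y) := by
      rintro ⟨u, θ⟩ ⟨v, θ'⟩ hxy
      obtain ⟨rfl, -⟩ := (hR _ _).1 hxy
      exact (hR'_fold _ _).2 ⟨hxy, rfl⟩
    simpa [fold, Function.onFun] using Relation.ReflTransGen.lift fold hpush _ _ hreach
  · rintro ⟨m, -, hreach⟩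
    have hpull : ∀ x y, R' (fold x) y → ∃ z, R x z ∧ fold z = y := fun x y hxy =>
      have ⟨hR_step, hy⟩ := (hR'_fold x y).1 hxy
      ⟨(y.1, x.2 + 1), hR_step, Prod.ext rfl hy.symm⟩
    obtain ⟨⟨t', θ⟩, hlift, hfold⟩ :=
      Relation.ReflTransGen.exists_lift fold hpull (a := (s, 0)) (by simpa [fold] using hreach)
    obtain ⟨rfl, -⟩ := Prod.mk.inj hfold
    exact ⟨θ, hlift⟩

/-- Correctness of the product construction for reachability on ultimately periodic
temporal graphs: reachability from `(s, 0)` under the time-incrementing step relation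
`R` coincides with reachability from `(s, 0)` in the finite product graph on
`V × {0, …, b + p − 1}` with the wrap-around step relation `R'`. -/
theorem stmt_8 {V : Type*} [Fintype V] (E : V → V → ℕ → Prop)
    (b p : ℕ) (hp : 0 < p)
    (hper : ∀ u v θ, b ≤ θ → (E u v θ ↔ E u v (θ + p)))
    (R R' : V × ℕ → V × ℕ → Prop)
    (hR : ∀ x y, R x y ↔ y.2 = x.2 + 1 ∧ E x.1 y.1 x.2)
    (hR' : ∀ x y, R' x y ↔ E x.1 y.1 x.2 ∧
      ((y.2 = x.2 + 1 ∧ x.2 + 1 ≤ b + p - 1) ∨ (x.2 = b + p - 1 ∧ y.2 = b)))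
    (s t : V) :
    (∃ θ : ℕ, Relation.ReflTransGen R (s, 0) (t, θ)) ↔
    (∃ m : ℕ, m ≤ b + p - 1 ∧ Relation.ReflTransGen R' (s, 0) (t, m)) :=
  stmt_8_general E b p hp hper R R' hR hR' s t
end

section
/- Let V be a vertex set and E : V → V → ℕ → Prop an availability relation. If there exists a temporal walk with waiting from s to t, i.e., vertices v₀ = s, v₁, …, v_m = t and strictly increasing times θ₁ < θ₂ < ⋯ < θ_m with E v_{j−1} v_j θ_j for all 1 ≤ j ≤ m, then there exists a temporal walk with waiting from s to t in which all vertices v'₀, …, v'_{m'} are pairwise distinct, whose length m' satisfies m' ≤ m, and whose arrival time θ'_{m'} satisfies θ'_{m'} ≤ θ_m. In particular, if V is finite, any vertex that is reachable by a temporal walk with waiting is reachable by one of length strictly less than the cardinality of V. -/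
/-!
If a temporal walk visits the same vertex at steps `i < j`, cut out the closed subwalk between
them and wait at that vertex instead: the next edge after the cycle is taken at time `θ (j + 1)`,
which is still later than `θ i`, so the times stay strictly increasing. The walk gets shorter and
its arrival time does not grow, so by induction on the length we reach a walk whose vertices are
pairwise distinct; its `m' + 1` vertices then force `m' < |V|`.
-/

structure IsTemporalWalk {V : Type*} (E : V → V → ℕ → Prop) (s t : V) (m : ℕ) (v : ℕ → V)
    (θ : ℕ → ℕ) : Prop where
  start : v 0 = s
  finish : v m = t
  time_lt_succ : ∀ j, 1 ≤ j → j < m → θ j < θ (j + 1)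
  edge : ∀ j, 1 ≤ j → j ≤ m → E (v (j - 1)) (v j) (θ j)

def cutAfter {α : Type*} (i d : ℕ) (f : ℕ → α) : ℕ → α :=
  fun k => if k ≤ i then f k else f (k + d)

theorem lt_card_of_injOn_Iic {V : Type*} [Fintype V] {v : ℕ → V} {m : ℕ}
    (h : Set.InjOn v (Set.Iic m)) : m < Fintype.card V := by
  have := Finset.card_le_card_of_injOn (t := Finset.univ) v
    (fun _ _ => Finset.mem_coe.2 (Finset.mem_univ _)) (by rwa [Finset.coe_Iic])
  rw [Nat.card_Iic, Finset.card_univ] at this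
  omega

namespace IsTemporalWalk

variable {V : Type*} {E : V → V → ℕ → Prop} {s t : V} {m : ℕ} {v : ℕ → V} {θ : ℕ → ℕ}

theorem strictMonoOn_time (hw : IsTemporalWalk E s t m v θ) : StrictMonoOn θ (Set.Icc 1 m) :=
  strictMonoOn_of_lt_add_one Set.ordConnected_Icc fun a _ ha ha' =>
    hw.time_lt_succ a ha.1 (by simp only [Set.mem_Icc] at ha'; omega)

theorem time_le_arrival (hw : IsTemporalWalk E s t m v θ) {a : ℕ} (ha : 1 ≤ a) (ham : a ≤ m) :
    θ a ≤ θ m :=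
  hw.strictMonoOn_time.monotoneOn ⟨ha, ham⟩ ⟨ha.trans ham, le_rfl⟩ ham

theorem cut (hw : IsTemporalWalk E s t m v θ) {i d : ℕ} (hid : i + d ≤ m)
    (hloop : v i = v (i + d)) :
    IsTemporalWalk E s t (m - d) (cutAfter i d v) (cutAfter i d θ) where
  start := by simp [cutAfter, hw.start]
  finish := by
    unfold cutAfter
    split_ifs with h
    · rw [show m - d = i by omega, hloop, show i + d = m by omega, hw.finish]
    · rw [Nat.sub_add_cancel (by omega), hw.finish]
  time_lt_succ k hk hkm := by
    unfold cutAfter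
    split_ifs with h₁ h₂ h₂
    · exact hw.time_lt_succ k hk (by omega)
    · rw [show k = i by omega]
      exact hw.strictMonoOn_time ⟨hk.trans h₁, by omega⟩ ⟨by omega, by omega⟩ (by omega)
    · omega
    · rw [show k + 1 + d = k + d + 1 by omega]
      exact hw.time_lt_succ (k + d) (by omega) (by omega)
  edge k hk hkm := by
    unfold cutAfter
    split_ifs with h₁ h₂ h₂
    · exact hw.edge k hk (by omega)
    · rw [show k - 1 = i by omega, hloop]
      simpa [show i + d = k + d - 1 by omega] using hw.edge (k + d) (by omega) (by omega)
    · omega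
    · rw [show k - 1 + d = k + d - 1 by omega]
      exact hw.edge (k + d) (by omega) (by omega)

theorem cut_arrival_le (hw : IsTemporalWalk E s t m v θ) {i d : ℕ} (hmd : 1 ≤ m - d) :
    cutAfter i d θ (m - d) ≤ θ m := by
  unfold cutAfter
  split_ifs
  · exact hw.time_le_arrival hmd (Nat.sub_le m d)
  · rw [Nat.sub_add_cancel (by omega)]

theorem exists_injOn (hw : IsTemporalWalk E s t m v θ) :
    ∃ m' v' θ', m' ≤ m ∧ IsTemporalWalk E s t m' v' θ' ∧ Set.InjOn v' (Set.Iic m') ∧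
      (1 ≤ m' → θ' m' ≤ θ m) := by
  induction m using Nat.strong_induction_on generalizing v θ with
  | _ m ih =>
  by_cases hinj : Set.InjOn v (Set.Iic m)
  · exact ⟨m, v, θ, le_rfl, hw, hinj, fun _ => le_rfl⟩
  obtain ⟨i, j, hij, hjm, hloop⟩ : ∃ i j, i < j ∧ j ≤ m ∧ v i = v j := by
    simp only [Set.InjOn, Set.mem_Iic, not_forall] at hinj
    obtain ⟨a, ha, b, hb, hab, hne⟩ := hinj
    rcases Nat.lt_or_gt_of_ne hne with h | h
    · exact ⟨a, b, h, hb, hab⟩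
    · exact ⟨b, a, h, ha, hab.symm⟩
  obtain ⟨d, rfl⟩ := Nat.exists_eq_add_of_lt hij
  obtain ⟨m', v', θ', hm', hw', hinj', harr'⟩ :=
    ih (m - (d + 1)) (by omega) (hw.cut (by omega : i + (d + 1) ≤ m) (by rwa [← add_assoc]))
  exact ⟨m', v', θ', by omega, hw', hinj', fun h => (harr' h).trans (hw.cut_arrival_le (by omega))⟩

end IsTemporalWalk

/-- If there is a temporal walk with waiting from `s` to `t` (vertices `v 0 = s, …, v m = t`
and strictly increasing times `θ 1 < ⋯ < θ m` with `E (v (j-1)) (v j) (θ j)`), then there is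
one with pairwise distinct vertices, of length at most `m`, whose arrival time is at most
`θ m`; in particular, whenever `V` is finite its length is less than the cardinality of `V`. -/
theorem stmt_9 {V : Type*} (E : V → V → ℕ → Prop) (s t : V)
    (m : ℕ) (v : ℕ → V) (θ : ℕ → ℕ)
    (hs : v 0 = s) (ht : v m = t)
    (hmono : ∀ j, 1 ≤ j → j < m → θ j < θ (j + 1))
    (hedge : ∀ j, 1 ≤ j → j ≤ m → E (v (j - 1)) (v j) (θ j)) :
    ∃ (m' : ℕ) (v' : ℕ → V) (θ' : ℕ → ℕ),
      m' ≤ m ∧ v' 0 = s ∧ v' m' = t ∧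
      (∀ i ≤ m', ∀ j ≤ m', i ≠ j → v' i ≠ v' j) ∧
      (∀ j, 1 ≤ j → j < m' → θ' j < θ' (j + 1)) ∧
      (∀ j, 1 ≤ j → j ≤ m' → E (v' (j - 1)) (v' j) (θ' j)) ∧
      (1 ≤ m' → θ' m' ≤ θ m) ∧
      (∀ (inst : Fintype V), m' < @Fintype.card V inst) := by
  obtain ⟨m', v', θ', hm', hw', hinj, harr⟩ :=
    (IsTemporalWalk.mk hs ht hmono hedge).exists_injOn
  exact ⟨m', v', θ', hm', hw'.start, hw'.finish, fun i hi j hj hij h => hij (hinj hi hj h),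
    hw'.time_lt_succ, hw'.edge, harr, fun _ => lt_card_of_injOn_Iic hinj⟩
end

section
/- Let V be a finite vertex set of cardinality N, let E : V → V → ℕ → Prop be an availability relation, let s ∈ V, and let F₁, …, F_k be nonempty subsets of V. If there exists a temporal walk with waiting starting at s that visits at least one vertex of each set F₁, …, F_k, then there exists such a temporal walk of length at most N·k. -/
/-!
A shortest covering walk has length at most `N * k`. Let `R j` be the set of targets already
reached among `v 0, …, v j`; it grows with `j`. By minimality the last vertex is needed, so
`#R j < k` for every `j < m`. If `m > N * k`, two indices `a < b < m` share both the vertex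
`v a = v b` and the count `#R a = #R b`, hence `R a = R b`: no target is first reached in
`(a, b]`. Cutting out that loop keeps the walk temporal, since its times are still strictly
increasing, and keeps every target visited, contradicting minimality.
-/

open Finset

namespace TemporalWalk

variable {V ι : Type*}

structure IsWalk (E : V → V → ℕ → Prop) (m : ℕ) (v : ℕ → V) (θ : ℕ → ℕ) : Prop where
  time_lt_succ : ∀ j, 1 ≤ j → j < m → θ j < θ (j + 1)
  edge : ∀ j, 1 ≤ j → j ≤ m → E (v (j - 1)) (v j) (θ j)

def Covers (F : ι → Set V) (m : ℕ) (v : ℕ → V) : Prop :=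
  ∀ r, ∃ j ≤ m, v j ∈ F r

/-- The sequence `f` with the entries at indices `a + 1, …, b` removed. -/
def cutOut {α : Type*} (a b : ℕ) (f : ℕ → α) (j : ℕ) : α :=
  if j ≤ a then f j else f (j + (b - a))

variable {E : V → V → ℕ → Prop} {m : ℕ} {v : ℕ → V} {θ : ℕ → ℕ}

namespace IsWalk

theorem time_lt (hw : IsWalk E m v θ) {i j : ℕ} (hi : 1 ≤ i) (hij : i < j) (hjm : j ≤ m) :
    θ i < θ j := by
  induction j, hij using Nat.le_induction with
  | base => exact hw.time_lt_succ i hi hjm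
  | succ j hij ih => exact (ih (by omega)).trans (hw.time_lt_succ j (by omega) hjm)

theorem of_le (hw : IsWalk E m v θ) {n : ℕ} (hn : n ≤ m) : IsWalk E n v θ :=
  ⟨fun j hj hjn => hw.time_lt_succ j hj (by omega), fun j hj hjn => hw.edge j hj (by omega)⟩

theorem cutOut (hw : IsWalk E m v θ) {a b : ℕ} (hab : a < b) (hbm : b ≤ m) (hv : v a = v b) :
    IsWalk E (m - (b - a)) (cutOut a b v) (cutOut a b θ) := by
  constructor
  · intro j hj hjm
    by_cases hja : j + 1 ≤ a
    · simp only [TemporalWalk.cutOut, hja, show j ≤ a by omega, if_true]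
      exact hw.time_lt_succ j hj (by omega)
    by_cases hja' : j ≤ a
    · obtain rfl : j = a := by omega
      simp only [TemporalWalk.cutOut, hja, le_rfl, if_true, if_false]
      exact hw.time_lt hj (by omega) (by omega)
    · simp only [TemporalWalk.cutOut, hja, hja', if_false]
      rw [show j + 1 + (b - a) = j + (b - a) + 1 by omega]
      exact hw.time_lt_succ _ (by omega) (by omega)
  · intro j hj hjm
    by_cases hja : j ≤ a
    · simp only [TemporalWalk.cutOut, hja, show j - 1 ≤ a by omega, if_true]
      exact hw.edge j hj (by omega)
    by_cases hja' : j - 1 ≤ a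
    · obtain rfl : j = a + 1 := by omega
      simp only [TemporalWalk.cutOut, hja, le_rfl, if_true, if_false, Nat.add_sub_cancel, hv,
        show a + 1 + (b - a) = b + 1 by omega]
      exact hw.edge (b + 1) (by omega) (by omega)
    · simp only [TemporalWalk.cutOut, hja, hja', if_false]
      rw [show j - 1 + (b - a) = j + (b - a) - 1 by omega]
      exact hw.edge _ (by omega) (by omega)

end IsWalk

theorem Covers.cutOut {F : ι → Set V} {a b : ℕ} (hab : a < b) (hbm : b ≤ m)
    (h : ∀ r, ∃ j, (j ≤ a ∨ b < j ∧ j ≤ m) ∧ v j ∈ F r) :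
    Covers F (m - (b - a)) (cutOut a b v) := by
  intro r
  obtain ⟨j, hj | ⟨hbj, hjm⟩, hvj⟩ := h r
  · exact ⟨j, by omega, by simpa [TemporalWalk.cutOut, hj] using hvj⟩
  · refine ⟨j - (b - a), by omega, ?_⟩
    simpa [TemporalWalk.cutOut, show ¬ j - (b - a) ≤ a by omega,
      show j - (b - a) + (b - a) = j by omega] using hvj

section Reached

variable [Fintype ι] (F : ι → Set V) (v : ℕ → V)

noncomputable def reached (j : ℕ) : Finset ι := by
  classical exact univ.filter fun r => ∃ i ≤ j, v i ∈ F r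

variable {F v}

theorem mem_reached {j : ℕ} {r : ι} : r ∈ reached F v j ↔ ∃ i ≤ j, v i ∈ F r := by
  simp [reached]

theorem reached_mono : Monotone (reached F v) := fun _ _ hij _ hr => by
  obtain ⟨i, hi, hvi⟩ := mem_reached.1 hr
  exact mem_reached.2 ⟨i, hi.trans hij, hvi⟩

theorem covers_iff_reached_eq_univ : Covers F m v ↔ reached F v m = univ := by
  simp [Covers, eq_univ_iff_forall, mem_reached]

theorem reached_eq_of_card_eq {a b : ℕ} (hab : a ≤ b)
    (hcard : #(reached F v a) = #(reached F v b)) : reached F v a = reached F v b :=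
  eq_of_subset_of_card_le (reached_mono hab) hcard.ge

theorem exists_visit_outside (hcov : Covers F m v) {a b : ℕ} (hR : reached F v a = reached F v b)
    (r : ι) : ∃ j, (j ≤ a ∨ b < j ∧ j ≤ m) ∧ v j ∈ F r := by
  by_cases hr : r ∈ reached F v a
  · obtain ⟨i, hi, hvi⟩ := mem_reached.1 hr
    exact ⟨i, Or.inl hi, hvi⟩
  · obtain ⟨j, hjm, hvj⟩ := hcov r
    have hbj : b < j := by
      by_contra! hjb
      exact hr (hR ▸ mem_reached.2 ⟨j, hjb, hvj⟩)
    exact ⟨j, Or.inr ⟨hbj, hjm⟩, hvj⟩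

end Reached

theorem exists_walk_covers_length_le [Fintype V] [Fintype ι] {F : ι → Set V}
    (hw : IsWalk E m v θ) (hcov : Covers F m v) :
    ∃ (n : ℕ) (v' : ℕ → V) (θ' : ℕ → ℕ), n ≤ Fintype.card V * Fintype.card ι ∧
      v' 0 = v 0 ∧ IsWalk E n v' θ' ∧ Covers F n v' := by
  classical
  have hex : ∃ n, ∃ (v' : ℕ → V) (θ' : ℕ → ℕ), v' 0 = v 0 ∧ IsWalk E n v' θ' ∧ Covers F n v' :=
    ⟨m, v, θ, rfl, hw, hcov⟩
  obtain ⟨u, τ, hu0, huw, hucov⟩ := Nat.find_spec hex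
  set n := Nat.find hex
  refine ⟨n, u, τ, ?_, hu0, huw, hucov⟩
  by_contra! hn
  have hlast : #(reached F u (n - 1)) < Fintype.card ι := by
    refine (card_lt_iff_ne_univ _).2 fun h => Nat.find_min hex (m := n - 1) (by omega) ?_
    exact ⟨u, τ, hu0, huw.of_le (by omega), covers_iff_reached_eq_univ.2 h⟩
  have hcard : #((univ : Finset V) ×ˢ range (Fintype.card ι)) < #(range n) := by
    simpa [card_product] using hn
  have hmaps : Set.MapsTo (fun j => (u j, #(reached F u j))) (range n : Finset ℕ)
      ((univ : Finset V) ×ˢ range (Fintype.card ι) : Finset (V × ℕ)) := fun j hj =>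
    mem_product.2 ⟨mem_univ _, mem_range.2 <|
      (card_le_card (reached_mono (Nat.le_sub_one_of_lt (mem_range.1 hj)))).trans_lt hlast⟩
  obtain ⟨x, hx, y, hy, hxy, hfxy⟩ := exists_ne_map_eq_of_card_lt_of_maps_to hcard hmaps
  simp only [mem_range, Prod.mk.injEq] at hx hy hfxy
  wlog hlt : x < y generalizing x y
  · exact this y x hxy.symm hy hx ⟨hfxy.1.symm, hfxy.2.symm⟩ (by omega)
  have hR := reached_eq_of_card_eq hlt.le hfxy.2
  refine Nat.find_min hex (m := n - (y - x)) (by omega) ⟨cutOut x y u, cutOut x y τ, ?_, ?_, ?_⟩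
  · simpa [cutOut] using hu0
  · exact huw.cutOut hlt hy.le hfxy.1
  · exact Covers.cutOut hlt hy.le (exists_visit_outside hucov hR)

end TemporalWalk

theorem stmt_10_general {V : Type*} [Fintype V] (N : ℕ) (hN : N = Fintype.card V)
    (E : V → V → ℕ → Prop) (s : V) (k : ℕ) (F : Fin k → Set V)
    (hwalk : ∃ (m : ℕ) (v : ℕ → V) (θ : ℕ → ℕ),
      v 0 = s ∧
      (∀ j, 1 ≤ j → j < m → θ j < θ (j + 1)) ∧
      (∀ j, 1 ≤ j → j ≤ m → E (v (j - 1)) (v j) (θ j)) ∧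
      (∀ r, ∃ j ≤ m, v j ∈ F r)) :
    ∃ (m : ℕ) (v : ℕ → V) (θ : ℕ → ℕ),
      m ≤ N * k ∧
      v 0 = s ∧
      (∀ j, 1 ≤ j → j < m → θ j < θ (j + 1)) ∧
      (∀ j, 1 ≤ j → j ≤ m → E (v (j - 1)) (v j) (θ j)) ∧
      (∀ r, ∃ j ≤ m, v j ∈ F r) := by
  obtain ⟨m, v, θ, hv0, hθ, hE, hcov⟩ := hwalk
  obtain ⟨n, v', θ', hn, hv'0, ⟨hθ', hE'⟩, hcov'⟩ :=
    TemporalWalk.exists_walk_covers_length_le (E := E) (F := F) ⟨hθ, hE⟩ hcov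
  rw [Fintype.card_fin, ← hN] at hn
  exact ⟨n, v', θ', hn, hv'0.trans hv0, hθ', hE', hcov'⟩

/-- If a temporal walk with waiting starting at `s` visits at least one vertex of each of
the nonempty target sets `F 0, …, F (k-1)`, then there is such a walk of length at most
`N * k` where `N` is the number of vertices. -/
theorem stmt_10 {V : Type*} [Fintype V] (N : ℕ) (hN : N = Fintype.card V)
    (E : V → V → ℕ → Prop) (s : V) (k : ℕ) (F : Fin k → Set V)
    (hF : ∀ r, (F r).Nonempty)
    (hwalk : ∃ (m : ℕ) (v : ℕ → V) (θ : ℕ → ℕ),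
      v 0 = s ∧
      (∀ j, 1 ≤ j → j < m → θ j < θ (j + 1)) ∧
      (∀ j, 1 ≤ j → j ≤ m → E (v (j - 1)) (v j) (θ j)) ∧
      (∀ r, ∃ j ≤ m, v j ∈ F r)) :
    ∃ (m : ℕ) (v : ℕ → V) (θ : ℕ → ℕ),
      m ≤ N * k ∧
      v 0 = s ∧
      (∀ j, 1 ≤ j → j < m → θ j < θ (j + 1)) ∧
      (∀ j, 1 ≤ j → j ≤ m → E (v (j - 1)) (v j) (θ j)) ∧
      (∀ r, ∃ j ≤ m, v j ∈ F r) :=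
  stmt_10_general N hN E s k F hwalk
end

section
/- Let V be a finite vertex set of cardinality N and let E : V → V → ℕ → Prop be an availability relation such that there exist b ∈ ℕ and p > 0 with: for all u, v ∈ V and all θ ≥ b, E u v θ holds if and only if E u v (θ + p) holds. If there exists a temporal walk with waiting from s to t, then there exists a temporal walk with waiting from s to t of some length m ≤ N − 1 whose times τ₁ < ⋯ < τ_m satisfy τ_j ≤ b + p·j for every j; in particular its arrival time is at most b + p·N. -/
/-!
A shortest temporal walk from `s` to `t` visits no vertex twice: cutting out the segment between
two visits of the same vertex keeps the times increasing, so some walk has length at most `N - 1`.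
Along such a walk, each time can be lowered greedily: as long as it exceeds both `b` and the
previous time by more than `p`, subtract `p`, which by periodicity keeps the edge available.
Each step then lands at most `p` above the maximum of `b` and the previous time, so `τ j ≤ b + p j`.
-/

/-- Times are indexed from `1`; `θ 0` is irrelevant. -/
def IsTemporalWalk_s11 {V : Type*} (E : V → V → ℕ → Prop) (m : ℕ) (v : ℕ → V) (θ : ℕ → ℕ) : Prop :=
  (∀ j, 1 ≤ j → j < m → θ j < θ (j + 1)) ∧ (∀ j, 1 ≤ j → j ≤ m → E (v (j - 1)) (v j) (θ j))

namespace IsTemporalWalk_s11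

variable {V : Type*} {E : V → V → ℕ → Prop} {m : ℕ} {v : ℕ → V} {θ : ℕ → ℕ}

theorem strictMonoOn (h : IsTemporalWalk_s11 E m v θ) : StrictMonoOn θ (Set.Icc 1 m) :=
  strictMonoOn_of_lt_add_one Set.ordConnected_Icc fun j _ hj hj1 => h.1 j hj.1 hj1.2

/-- Drop the steps `i + 1, …, i + d` of a sequence. -/
def skip {α : Type*} (i d : ℕ) (f : ℕ → α) (j : ℕ) : α :=
  if j ≤ i then f j else f (j + d)

theorem skip_loop (h : IsTemporalWalk_s11 E m v θ) {i k : ℕ} (hik : i < k) (hkm : k ≤ m)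
    (hv : v i = v k) : IsTemporalWalk_s11 E (m - (k - i)) (skip i (k - i) v) (skip i (k - i) θ) := by
  refine ⟨fun j hj hjm => ?_, fun j hj hjm => ?_⟩
  · unfold skip
    rcases lt_trichotomy j i with hji | rfl | hij
    · simpa [hji.le, Nat.succ_le_of_lt hji] using h.1 j hj (by omega)
    · simp only [le_refl, if_true, Nat.not_succ_le_self, if_false]
      exact h.strictMonoOn ⟨hj, by omega⟩ ⟨by omega, by omega⟩ (by omega)
    · simpa [hij.not_ge, show ¬ j + 1 ≤ i by omega, show j + 1 + (k - i) = j + (k - i) + 1 by omega]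
        using h.1 (j + (k - i)) (by omega) (by omega)
  · unfold skip
    rcases lt_or_ge i j with hij | hji
    · by_cases hj1 : j - 1 ≤ i
      · obtain rfl : j = i + 1 := by omega
        simpa [hv, show i + 1 + (k - i) = k + 1 by omega] using h.2 (k + 1) (by omega) (by omega)
      · simpa [hij.not_ge, hj1, show j - 1 + (k - i) = j + (k - i) - 1 by omega]
          using h.2 (j + (k - i)) (by omega) (by omega)
    · simpa [hji, show j - 1 ≤ i by omega] using h.2 j hj (by omega)

theorem exists_length_le_card_sub_one [Fintype V] (h : IsTemporalWalk_s11 E m v θ) :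
    ∃ m' ≤ Fintype.card V - 1, ∃ (v' : ℕ → V) (θ' : ℕ → ℕ),
      v' 0 = v 0 ∧ v' m' = v m ∧ IsTemporalWalk_s11 E m' v' θ' := by
  induction m using Nat.strong_induction_on generalizing v θ with
  | _ m ih =>
  by_cases hm : m ≤ Fintype.card V - 1
  · exact ⟨m, hm, v, θ, rfl, rfl, h⟩
  have hcard : Fintype.card V < Fintype.card (Fin (m + 1)) := by
    have : 0 < Fintype.card V := Fintype.card_pos_iff.mpr ⟨v 0⟩
    simp only [Fintype.card_fin]
    omega
  obtain ⟨i, k, hik, hkm, hv⟩ : ∃ i k : ℕ, i < k ∧ k ≤ m ∧ v i = v k := by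
    obtain ⟨a, c, hne, hac⟩ := Fintype.exists_ne_map_eq_of_card_lt (fun j : Fin (m + 1) => v j) hcard
    rcases hne.lt_or_gt with hlt | hlt
    exacts [⟨a, c, hlt, by omega, hac⟩, ⟨c, a, hlt, by omega, hac.symm⟩]
  obtain ⟨m', hm', v', θ', h0, hend, h'⟩ :=
    ih (m - (k - i)) (by omega) (h.skip_loop hik hkm hv)
  refine ⟨m', hm', v', θ', by simp [h0, skip], ?_, h'⟩
  rw [hend, skip]
  split_ifs with hmi
  · rwa [show m - (k - i) = i by omega, show m = k by omega]
  · congr 1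
    omega

end IsTemporalWalk_s11

/-- Lowers `x` by multiples of `p` as long as the result stays `≥ b` and `> L`. -/
def reduceTime (p b L x : ℕ) : ℕ :=
  if 0 < p ∧ b + p ≤ x ∧ L + p < x then reduceTime p b L (x - p) else x
termination_by x
decreasing_by omega

section reduceTime

variable {p b L : ℕ}

theorem reduceTime_le (x : ℕ) : reduceTime p b L x ≤ x := by
  induction x using Nat.strong_induction_on with
  | _ x ih =>
  rw [reduceTime]
  split_ifs with h
  · exact (ih (x - p) (by omega)).trans (Nat.sub_le x p)
  · exact le_rfl

theorem lt_reduceTime {x : ℕ} (hx : L < x) : L < reduceTime p b L x := by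
  induction x using Nat.strong_induction_on with
  | _ x ih =>
  rw [reduceTime]
  split_ifs with h
  exacts [ih (x - p) (by omega) (by omega), hx]

theorem reduceTime_le_max_add (hp : 0 < p) (x : ℕ) : reduceTime p b L x ≤ max b L + p := by
  induction x using Nat.strong_induction_on with
  | _ x ih =>
  rw [reduceTime]
  split_ifs with h
  · exact ih (x - p) (by omega)
  · omega

theorem reduceTime_mem {P : ℕ → Prop} (hper : ∀ θ, b ≤ θ → (P θ ↔ P (θ + p))) {x : ℕ}
    (hx : P x) : P (reduceTime p b L x) := by
  induction x using Nat.strong_induction_on with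
  | _ x ih =>
  rw [reduceTime]
  split_ifs with h
  · refine ih (x - p) (by omega) ((hper (x - p) (by omega)).mpr ?_)
    rwa [Nat.sub_add_cancel (by omega)]
  · exact hx

end reduceTime

def reducedTimes (p b : ℕ) (θ : ℕ → ℕ) : ℕ → ℕ
  | 0 => 0
  | j + 1 => reduceTime p b (reducedTimes p b θ j) (θ (j + 1))

theorem reducedTimes_le (p b : ℕ) (θ : ℕ → ℕ) : ∀ j, reducedTimes p b θ j ≤ θ j
  | 0 => Nat.zero_le _
  | _ + 1 => reduceTime_le _

theorem reducedTimes_le_add_mul {p : ℕ} (hp : 0 < p) (b : ℕ) (θ : ℕ → ℕ) :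
    ∀ j, reducedTimes p b θ j ≤ b + p * j
  | 0 => Nat.zero_le _
  | j + 1 => by
    have := reducedTimes_le_add_mul hp b θ j
    have := reduceTime_le_max_add (b := b) (L := reducedTimes p b θ j) hp (θ (j + 1))
    rw [reducedTimes, mul_add_one]
    omega

theorem IsTemporalWalk_s11.reducedTimes {V : Type*} {E : V → V → ℕ → Prop} {m : ℕ} {v : ℕ → V}
    {θ : ℕ → ℕ} {b p : ℕ} (hper : ∀ u w θ, b ≤ θ → (E u w θ ↔ E u w (θ + p)))
    (h : IsTemporalWalk_s11 E m v θ) : IsTemporalWalk_s11 E m v (reducedTimes p b θ) := by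
  refine ⟨fun j hj hjm => lt_reduceTime ?_, fun j hj hjm => ?_⟩
  · exact (reducedTimes_le p b θ j).trans_lt (h.1 j hj hjm)
  · obtain ⟨j, rfl⟩ : ∃ i, j = i + 1 := ⟨j - 1, by omega⟩
    exact reduceTime_mem (hper _ _) (h.2 (j + 1) hj hjm)

/-- On an ultimately periodic temporal graph (bound `b`, period `p > 0`), if a temporal
walk with waiting from `s` to `t` exists, then one exists of length `m ≤ N − 1` whose
times satisfy `τ j ≤ b + p * j`; in particular its arrival time is at most `b + p * N`. -/
theorem stmt_11 {V : Type*} [Fintype V] (N : ℕ) (hN : N = Fintype.card V)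
    (E : V → V → ℕ → Prop) (b p : ℕ) (hp : 0 < p)
    (hper : ∀ u v θ, b ≤ θ → (E u v θ ↔ E u v (θ + p)))
    (s t : V)
    (hwalk : ∃ (m : ℕ) (v : ℕ → V) (θ : ℕ → ℕ),
      v 0 = s ∧ v m = t ∧
      (∀ j, 1 ≤ j → j < m → θ j < θ (j + 1)) ∧
      (∀ j, 1 ≤ j → j ≤ m → E (v (j - 1)) (v j) (θ j))) :
    ∃ (m : ℕ) (v : ℕ → V) (τ : ℕ → ℕ),
      m ≤ N - 1 ∧
      v 0 = s ∧ v m = t ∧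
      (∀ j, 1 ≤ j → j < m → τ j < τ (j + 1)) ∧
      (∀ j, 1 ≤ j → j ≤ m → E (v (j - 1)) (v j) (τ j)) ∧
      (∀ j, 1 ≤ j → j ≤ m → τ j ≤ b + p * j) ∧
      (1 ≤ m → τ m ≤ b + p * N) := by
  obtain ⟨m, v, θ, rfl, rfl, hwalk⟩ := hwalk
  obtain ⟨m', hm', v', θ', h0, hend, hshort⟩ :=
    IsTemporalWalk_s11.exists_length_le_card_sub_one (E := E) hwalk
  have hbound := reducedTimes_le_add_mul hp b θ'
  obtain ⟨hinc, hE⟩ := hshort.reducedTimes hper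
  refine ⟨m', v', reducedTimes p b θ', hN ▸ hm', h0, hend, hinc, hE,
    fun j _ _ => hbound j, fun _ => (hbound m').trans ?_⟩
  gcongr
  omega
end

section
/- Let V be a finite vertex set and E : V → V → ℕ → Prop an availability relation such that there exist b ∈ ℕ and p > 0 with: for all u, v ∈ V and all θ ≥ b, E u v θ holds if and only if E u v (θ + p) holds. Define the step relation R on V × ℕ by R (u, θ) (v, θ') iff θ' = θ + 1 and E u v θ, and the step relation R' on V × {0, …, b + p − 1} by R' (u, i) (v, j) iff E u v i and (either j = i + 1 ≤ b + p − 1, or i = b + p − 1 and j = b). Let s ∈ V and let F₁, …, F_k ⊆ V. Then there is a finite R-path starting at (s, 0) whose sequence of visited V-components contains, for each 1 ≤ r ≤ k, at least one vertex of F_r, if and only if there is a finite R'-path starting at (s, 0) whose sequence of visited V-components contains, for each 1 ≤ r ≤ k, at least one vertex of F_r. -/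
/-!
An `R`-path from `(s, 0)` is forced to be at time `j` after `j` steps, and an `R'`-path is
forced to be at the folded time `windowIndex b p j`, because the time components of both
step relations are deterministic. So a path of either kind is the same as a walk
`v₀ = s, v₁, …` with `E vⱼ vⱼ₊₁` available at time `j`, respectively at time
`windowIndex b p j`, and these conditions agree by ultimate periodicity of `E`.
-/

/-- The lasso `0 → 1 → ⋯ → b + p - 1 → b` on which the folded time moves. -/
def IsLassoStep (b p i j : ℕ) : Prop :=
  (j = i + 1 ∧ i + 1 ≤ b + p - 1) ∨ (i = b + p - 1 ∧ j = b)

def windowIndex (b p θ : ℕ) : ℕ := if θ < b then θ else b + (θ - b) % p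

theorem IsLassoStep.right_unique {b p i j j' : ℕ} (h : IsLassoStep b p i j)
    (h' : IsLassoStep b p i j') : j = j' := by
  unfold IsLassoStep at h h'
  omega

theorem windowIndex_zero (b p : ℕ) : windowIndex b p 0 = 0 := by
  simp [windowIndex]

theorem isLassoStep_windowIndex {b p : ℕ} (hp : 0 < p) (θ : ℕ) :
    IsLassoStep b p (windowIndex b p θ) (windowIndex b p (θ + 1)) := by
  unfold IsLassoStep windowIndex
  by_cases hθ : θ + 1 < b
  · rw [if_pos (show θ < b by omega), if_pos hθ]; omega
  by_cases hθb : θ + 1 = b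
  · rw [if_pos (show θ < b by omega), if_neg hθ, hθb, Nat.sub_self, Nat.zero_mod]; omega
  · rw [if_neg (show ¬θ < b by omega), if_neg hθ, show θ + 1 - b = θ - b + 1 by omega]
    obtain ⟨q, r, hr, ha⟩ : ∃ q r, r < p ∧ θ - b = p * q + r :=
      ⟨_, _, Nat.mod_lt _ hp, (Nat.div_add_mod _ _).symm⟩
    rw [ha, add_assoc, Nat.mul_add_mod, Nat.mul_add_mod, Nat.mod_eq_of_lt hr]
    rcases Nat.lt_or_ge (r + 1) p with hr1 | hr1
    · rw [Nat.mod_eq_of_lt hr1]; omega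
    · rw [show r + 1 = p by omega, Nat.mod_self]; omega

section EventuallyPeriodic

variable {P : ℕ → Prop} {b p : ℕ}

theorem iff_add_mul_of_eventually_periodic (hP : ∀ θ, b ≤ θ → (P θ ↔ P (θ + p)))
    {θ : ℕ} (hθ : b ≤ θ) (n : ℕ) : P (θ + p * n) ↔ P θ := by
  induction n with
  | zero => simp
  | succ n ih =>
    rw [mul_add_one, ← add_assoc, ← hP _ (by omega), ih]

theorem apply_windowIndex_iff_of_eventually_periodic
    (hP : ∀ θ, b ≤ θ → (P θ ↔ P (θ + p))) (θ : ℕ) : P (windowIndex b p θ) ↔ P θ := by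
  unfold windowIndex
  split_ifs with hθ
  · rfl
  · conv_rhs =>
      rw [← Nat.add_sub_of_le (not_lt.1 hθ), ← Nat.mod_add_div (θ - b) p, ← add_assoc]
    exact (iff_add_mul_of_eventually_periodic hP (Nat.le_add_right _ _) _).symm

end EventuallyPeriodic

theorem eq_of_chain_of_right_unique {T : ℕ → ℕ → Prop}
    (hT : ∀ {i j j'}, T i j → T i j' → j = j') {f g : ℕ → ℕ} {L : ℕ} (h0 : f 0 = g 0)
    (hf : ∀ j < L, T (f j) (f (j + 1))) (hg : ∀ j, T (g j) (g (j + 1))) :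
    ∀ j ≤ L, f j = g j := by
  intro j hj
  induction j with
  | zero => exact h0
  | succ j ih =>
    have hfj := hf j hj
    rw [ih (by omega)] at hfj
    exact hT hfj (hg j)

theorem exists_path_iff_exists_walk {V ι : Type*} (S : V × ℕ → V × ℕ → Prop)
    (A : V → V → ℕ → Prop) (T : ℕ → ℕ → Prop)
    (hS : ∀ x y, S x y ↔ T x.2 y.2 ∧ A x.1 y.1 x.2) (hT : ∀ {i j j'}, T i j → T i j' → j = j')
    (g : ℕ → ℕ) (hg : ∀ j, T (g j) (g (j + 1)))
    (s : V) {t : ℕ} (hg0 : g 0 = t) (F : ι → Set V) :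
    (∃ (L : ℕ) (f : ℕ → V × ℕ), f 0 = (s, t) ∧
      (∀ j < L, S (f j) (f (j + 1))) ∧ (∀ r, ∃ j ≤ L, (f j).1 ∈ F r)) ↔
    (∃ (L : ℕ) (v : ℕ → V), v 0 = s ∧
      (∀ j < L, A (v j) (v (j + 1)) (g j)) ∧ (∀ r, ∃ j ≤ L, v j ∈ F r)) := by
  constructor
  · rintro ⟨L, f, hf0, hstep, hvisit⟩
    have htime : ∀ j ≤ L, (f j).2 = g j :=
      eq_of_chain_of_right_unique (T := T) hT (by rw [hf0, hg0])
        (fun j hj => ((hS (f j) (f (j + 1))).1 (hstep j hj)).1) hg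
    refine ⟨L, fun j => (f j).1, congrArg Prod.fst hf0, fun j hj => ?_, hvisit⟩
    rw [← htime j hj.le]
    exact ((hS _ _).1 (hstep j hj)).2
  · rintro ⟨L, v, hv0, hstep, hvisit⟩
    exact ⟨L, fun j => (v j, g j), Prod.ext hv0 hg0,
      fun j hj => (hS _ _).2 ⟨hg j, hstep j hj⟩, hvisit⟩

theorem stmt_12_general {V : Type*} (E : V → V → ℕ → Prop)
    (b p : ℕ) (hp : 0 < p)
    (hper : ∀ u v θ, b ≤ θ → (E u v θ ↔ E u v (θ + p)))
    (R R' : V × ℕ → V × ℕ → Prop)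
    (hR : ∀ x y, R x y ↔ y.2 = x.2 + 1 ∧ E x.1 y.1 x.2)
    (hR' : ∀ x y, R' x y ↔ E x.1 y.1 x.2 ∧
      ((y.2 = x.2 + 1 ∧ x.2 + 1 ≤ b + p - 1) ∨ (x.2 = b + p - 1 ∧ y.2 = b)))
    (s : V) (k : ℕ) (F : Fin k → Set V) :
    (∃ (L : ℕ) (f : ℕ → V × ℕ), f 0 = (s, 0) ∧
      (∀ j < L, R (f j) (f (j + 1))) ∧
      (∀ r, ∃ j ≤ L, (f j).1 ∈ F r)) ↔
    (∃ (L : ℕ) (f : ℕ → V × ℕ), f 0 = (s, 0) ∧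
      (∀ j < L, R' (f j) (f (j + 1))) ∧
      (∀ r, ∃ j ≤ L, (f j).1 ∈ F r)) := by
  have hE : ∀ u v θ, E u v (windowIndex b p θ) ↔ E u v θ := fun u v =>
    apply_windowIndex_iff_of_eventually_periodic (hper u v)
  rw [exists_path_iff_exists_walk R E (fun i j => j = i + 1) hR
      (fun hj hj' => hj.trans hj'.symm) id (fun _ => rfl) s (t := 0) rfl F,
    exists_path_iff_exists_walk R' E (IsLassoStep b p) (fun x y => (hR' x y).trans and_comm)
      IsLassoStep.right_unique (windowIndex b p) (isLassoStep_windowIndex hp) s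
      (windowIndex_zero b p) F]
  simp only [hE, id]

/-- One-player core of the product construction for generalized reachability on
ultimately periodic temporal graphs: there is a finite `R`-path from `(s, 0)` visiting
a vertex of every target set `F r` iff there is a finite `R'`-path from `(s, 0)` in the
finite product graph visiting a vertex of every `F r`. -/
theorem stmt_12 {V : Type*} [Fintype V] (E : V → V → ℕ → Prop)
    (b p : ℕ) (hp : 0 < p)
    (hper : ∀ u v θ, b ≤ θ → (E u v θ ↔ E u v (θ + p)))
    (R R' : V × ℕ → V × ℕ → Prop)
    (hR : ∀ x y, R x y ↔ y.2 = x.2 + 1 ∧ E x.1 y.1 x.2)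
    (hR' : ∀ x y, R' x y ↔ E x.1 y.1 x.2 ∧
      ((y.2 = x.2 + 1 ∧ x.2 + 1 ≤ b + p - 1) ∨ (x.2 = b + p - 1 ∧ y.2 = b)))
    (s : V) (k : ℕ) (F : Fin k → Set V) :
    (∃ (L : ℕ) (f : ℕ → V × ℕ), f 0 = (s, 0) ∧
      (∀ j < L, R (f j) (f (j + 1))) ∧
      (∀ r, ∃ j ≤ L, (f j).1 ∈ F r)) ↔
    (∃ (L : ℕ) (f : ℕ → V × ℕ), f 0 = (s, 0) ∧
      (∀ j < L, R' (f j) (f (j + 1))) ∧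
      (∀ r, ∃ j ≤ L, (f j).1 ∈ F r)) :=
  stmt_12_general E b p hp hper R R' hR hR' s k F
end
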